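/- Define row vectors x_i^+ = (q_i^o)^T [I - x_{i+1}(q_{i+1}^o)^T] ··· [I - x_p(q_p^o)^T]. Then x_i^+ x_i = 1 and x_i^+ x_j = 0 for all j ≠ i. -/

import Mathlib

/-!
Write `r k = q_k^o`. Since `q_k` is orthogonal to `x_j` for `j < k` and `q_k ⬝ᵥ x_k = q_k ⬝ᵥ q_k ≠ 0`,
we have `r k ⬝ᵥ x k = 1` and `r k ⬝ᵥ x j = 0` for `j < k`. Multiplying a row vector `w` on the right by
`I - x_k (r k)ᵀ` therefore sends `w ⬝ᵥ x_k` to `0` and leaves `w ⬝ᵥ x_j` unchanged for `j < k`. Applying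
the factors `k = i+1, …, p` in turn to `r i` keeps `r i ⬝ᵥ x_j = δ_ij` for `j ≤ i`, and each `x_k`
with `k > i` is annihilated by its own factor and left alone by all later ones.
-/

open Matrix

/-- Simplified (non-normalized) Gram–Schmidt process. -/
noncomputable def gs {n p : ℕ} (x : Fin p → Fin n → ℝ) (i : Fin p) : Fin n → ℝ :=
  x i - ∑ j : Fin p, if h : j < i then ((gs x j ⬝ᵥ x i) / (gs x j ⬝ᵥ gs x j)) • gs x j else 0
termination_by i.1
decreasing_by exact h

/-- Product of the projection-style factors `[I - x_k (q_k^o)ᵀ]` over indices `k > i`,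
taken in increasing index order. -/
noncomputable def Pprod {n p : ℕ} (x : Fin p → Fin n → ℝ) (i : Fin p) :
    Matrix (Fin n) (Fin n) ℝ :=
  (((List.finRange p).filter (fun k => i < k)).map
    (fun k => (1 : Matrix (Fin n) (Fin n) ℝ) -
      vecMulVec (x k) ((gs x k ⬝ᵥ gs x k)⁻¹ • gs x k))).prod

section ProductOfElementaryFactors

variable {R ι m : Type*} [Ring R] [Fintype m] [DecidableEq m] [LT ι] {x r : ι → m → R}

theorem vecMul_one_sub_vecMulVec_dotProduct (w a b c : m → R) :
    (w ᵥ* (1 - vecMulVec a b)) ⬝ᵥ c = w ⬝ᵥ c - (w ⬝ᵥ a) * (b ⬝ᵥ c) := by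
  rw [vecMul_sub, vecMul_one, vecMul_vecMulVec, sub_dotProduct, smul_dotProduct, smul_eq_mul]

theorem vecMul_prod_dotProduct_of_forall_lt (hr : ∀ j k, j < k → r k ⬝ᵥ x j = 0)
    (w : m → R) {l : List ι} {j : ι} (hj : ∀ k ∈ l, j < k) :
    (w ᵥ* (l.map fun k => 1 - vecMulVec (x k) (r k)).prod) ⬝ᵥ x j = w ⬝ᵥ x j := by
  induction l generalizing w with
  | nil => rw [List.map_nil, List.prod_nil, vecMul_one]
  | cons k t ih =>
    rw [List.map_cons, List.prod_cons, ← vecMul_vecMul,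
      ih _ fun k' hk' => hj k' (List.mem_cons_of_mem k hk'),
      vecMul_one_sub_vecMulVec_dotProduct, hr j k (hj k List.mem_cons_self), mul_zero, sub_zero]

theorem vecMul_prod_dotProduct_of_mem (hr : ∀ j k, j < k → r k ⬝ᵥ x j = 0)
    (hr_self : ∀ k, r k ⬝ᵥ x k = 1) (w : m → R) {l : List ι} (hl : l.Pairwise (· < ·))
    {j : ι} (hj : j ∈ l) :
    (w ᵥ* (l.map fun k => 1 - vecMulVec (x k) (r k)).prod) ⬝ᵥ x j = 0 := by
  induction l generalizing w with
  | nil => exact absurd hj List.not_mem_nil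
  | cons k t ih =>
    rw [List.map_cons, List.prod_cons, ← vecMul_vecMul]
    obtain ⟨hkt, ht⟩ := List.pairwise_cons.mp hl
    rcases List.mem_cons.mp hj with rfl | hjt
    · rw [vecMul_prod_dotProduct_of_forall_lt hr _ hkt, vecMul_one_sub_vecMulVec_dotProduct,
        hr_self, mul_one, sub_self]
    · exact ih _ ht hjt

end ProductOfElementaryFactors

namespace InnerProductSpace

variable {𝕜 E ι : Type*} [RCLike 𝕜] [NormedAddCommGroup E] [InnerProductSpace 𝕜 E]
  [LinearOrder ι] [LocallyFiniteOrderBot ι] [WellFoundedLT ι]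

theorem inner_gramSchmidt_self (f : ι → E) (k : ι) :
    inner 𝕜 (gramSchmidt 𝕜 f k) (f k) = inner 𝕜 (gramSchmidt 𝕜 f k) (gramSchmidt 𝕜 f k) := by
  conv_lhs => rw [gramSchmidt_def'' 𝕜 f k]
  rw [inner_add_right, add_eq_left, inner_sum]
  refine Finset.sum_eq_zero fun j hj => ?_
  rw [inner_smul_right, gramSchmidt_orthogonal 𝕜 f (Finset.mem_Iio.mp hj).ne', mul_zero]

end InnerProductSpace

open InnerProductSpace

section GramSchmidtCoordinates

variable {n p : ℕ} (x : Fin p → Fin n → ℝ)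

theorem toLp_gs (i : Fin p) :
    WithLp.toLp 2 (gs x i) = gramSchmidt ℝ (fun j => WithLp.toLp 2 (x j)) i := by
  induction i using WellFoundedLT.induction with
  | ind i ih =>
    rw [gs]
    simp only [dite_eq_ite]
    rw [← Finset.sum_filter, Finset.filter_gt_eq_Iio, gramSchmidt_def, WithLp.toLp_sub,
      WithLp.toLp_sum]
    congr 1
    refine Finset.sum_congr rfl fun j hj => ?_
    rw [Submodule.starProjection_singleton, ← ih j (Finset.mem_Iio.mp hj), WithLp.toLp_smul,
      ← real_inner_self_eq_norm_sq, EuclideanSpace.inner_toLp_toLp,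
      EuclideanSpace.inner_toLp_toLp, star_trivial, dotProduct_comm (x i)]
    rfl

theorem gs_dotProduct_eq_inner (v : Fin n → ℝ) (i : Fin p) :
    gs x i ⬝ᵥ v = inner ℝ (gramSchmidt ℝ (fun j => WithLp.toLp 2 (x j)) i) (WithLp.toLp 2 v) := by
  rw [← toLp_gs, EuclideanSpace.inner_toLp_toLp, star_trivial, dotProduct_comm]

theorem gs_dotProduct_of_lt {j k : Fin p} (h : j < k) : gs x k ⬝ᵥ x j = 0 := by
  rw [gs_dotProduct_eq_inner]
  exact gramSchmidt_inv_triangular ℝ _ h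

theorem gs_dotProduct_self (k : Fin p) : gs x k ⬝ᵥ x k = gs x k ⬝ᵥ gs x k := by
  rw [gs_dotProduct_eq_inner, gs_dotProduct_eq_inner, toLp_gs, inner_gramSchmidt_self]

theorem gs_dotProduct_gs_ne_zero (hli : LinearIndependent ℝ x) (k : Fin p) :
    gs x k ⬝ᵥ gs x k ≠ 0 := by
  rw [gs_dotProduct_eq_inner, toLp_gs, inner_self_ne_zero]
  exact gramSchmidt_ne_zero k
    (hli.map' (WithLp.linearEquiv 2 ℝ (Fin n → ℝ)).symm.toLinearMap (LinearEquiv.ker _))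

end GramSchmidtCoordinates

theorem xplus_biorthogonal {n p : ℕ} (x : Fin p → Fin n → ℝ)
    (hli : LinearIndependent ℝ x)
    (xplus : Fin p → Fin n → ℝ)
    (hxp : xplus = fun i => Matrix.vecMul ((gs x i ⬝ᵥ gs x i)⁻¹ • gs x i) (Pprod x i))
    (i : Fin p) :
    xplus i ⬝ᵥ x i = 1 ∧ ∀ j : Fin p, j ≠ i → xplus i ⬝ᵥ x j = 0 := by
  set r : Fin p → Fin n → ℝ := fun k => (gs x k ⬝ᵥ gs x k)⁻¹ • gs x k
  have hr : ∀ j k, j < k → r k ⬝ᵥ x j = 0 := fun j k h => by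
    rw [smul_dotProduct, gs_dotProduct_of_lt x h, smul_zero]
  have hr_self : ∀ k, r k ⬝ᵥ x k = 1 := fun k => by
    rw [smul_dotProduct, gs_dotProduct_self, smul_eq_mul,
      inv_mul_cancel₀ (gs_dotProduct_gs_ne_zero x hli k)]
  have hmem : ∀ j, j ∈ (List.finRange p).filter (fun k => i < k) ↔ i < j := by simp
  subst hxp
  beta_reduce
  unfold Pprod
  refine ⟨?_, fun j hji => ?_⟩
  · rw [vecMul_prod_dotProduct_of_forall_lt hr _ fun k hk => (hmem k).1 hk]
    exact hr_self i
  rcases hji.lt_or_gt with hj | hj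
  · rw [vecMul_prod_dotProduct_of_forall_lt hr _ fun k hk => hj.trans ((hmem k).1 hk)]
    exact hr j i hj
  · exact vecMul_prod_dotProduct_of_mem hr hr_self _
      ((List.pairwise_lt_finRange p).filter _) ((hmem j).2 hj)
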